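/- Every solution f: V → B (V, B vector spaces over ℚ) of the cubic functional equation f(2x+y) + f(2x-y) = 12f(x) + 2f(x+y) + 2f(x-y) with f(0)=0 satisfies f(2x) = 8f(x) for all x ∈ V, and is a monomial function of degree 3, i.e., the diagonal of a symmetric 3-additive function. -/

import Mathlib

/-- `a : V^k → B` is `k`-additive: additive in each variable. -/
def MultiAdditive {k : ℕ} {V B : Type*} [Add V] [Add B] (a : (Fin k → V) → B) : Prop :=
  ∀ (i : Fin k) (v : Fin k → V) (x y : V),
    a (Function.update v i (x + y)) = a (Function.update v i x) + a (Function.update v i y)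

/-- `a : V^k → B` is symmetric: invariant under permutations of the arguments. -/
def SymmetricFn {k : ℕ} {V B : Type*} (a : (Fin k → V) → B) : Prop :=
  ∀ (σ : Equiv.Perm (Fin k)) (v : Fin k → V), a (v ∘ σ) = a v

/-!
Putting `x = 0` shows that `f` is odd, and then the equation at `(y, 2x)` combined with the one
at `(x, y)` gives `Δ_y³ f(z) = 6 f(y)` for all `z`: the third differences of `f` are constant.
In the group algebra `ℚ[V]`, acting on `V → B` by translations, `D a = [a] - 1` acts as `Δ_a`
and `D (a + b) = D a + D b + D a * D b`. Polarizing `D d * D a ^ 3 ∈ Ann f` with this identity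
shows that every product of four `D`'s annihilates `f`, so `A(a, b, c) = Δ_a Δ_b Δ_c f(0) / 6`
is additive in each variable; it is symmetric because `ℚ[V]` is commutative, and its diagonal
is `Δ_x³ f(0) / 6 = f(x)`.
-/

open AddMonoidAlgebra fwdDiff

theorem mul_mul_mul_eq_zero_of_mul_pow_three_eq_zero {V S : Type*} [Add V] [CommRing S]
    {D : V → S} (hD : ∀ a b, D (a + b) = D a + D b + D a * D b) (h6 : IsUnit (6 : S))
    (hcube : ∀ a d, D d * D a ^ 3 = 0) (a b c d : V) : D a * D b * D c * D d = 0 := by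
  have sq_mul_sq : ∀ a b, D a ^ 2 * D b ^ 2 = 0 := by
    intro a b
    refine h6.mul_right_eq_zero.mp ?_
    have h := hcube (a + b) a
    rw [hD] at h
    linear_combination 2 * h - 2 * (1 + 3 * D b + 3 * D b ^ 2 + D b ^ 3) * hcube a a
      - 2 * (3 + 6 * D b + 3 * D b ^ 2) * hcube a b - 2 * (1 + 3 * D a) * hcube b a
  have sq_mul_mul : ∀ a b c, D a ^ 2 * D b * D c = 0 := by
    intro a b c
    refine h6.mul_right_eq_zero.mp ?_
    have h := sq_mul_sq a (b + c)
    rw [hD] at h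
    linear_combination 3 * h - 3 * (1 + 2 * D c + D c ^ 2) * sq_mul_sq a b
      - 3 * (1 + 2 * D b) * sq_mul_sq a c
  refine h6.mul_right_eq_zero.mp ?_
  have h := sq_mul_mul (a + d) b c
  rw [hD] at h
  linear_combination 3 * h - 3 * (1 + 2 * D d + D d ^ 2) * sq_mul_mul a b c
    - 3 * (1 + 2 * D a) * sq_mul_mul d b c

section Translation

variable {V B : Type*} [AddCommMonoid V] [AddCommGroup B] [Module ℚ B]

noncomputable def translationHom : Multiplicative V →* Module.End ℚ (V → B) where
  toFun a := LinearMap.funLeft ℚ B (· + a.toAdd)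
  map_one' := by ext; simp
  map_mul' a b := by ext; simp [add_assoc]

noncomputable def translation : AddMonoidAlgebra ℚ V →ₐ[ℚ] Module.End ℚ (V → B) :=
  AddMonoidAlgebra.lift ℚ _ V translationHom

noncomputable def fwdDiffElem (a : V) : AddMonoidAlgebra ℚ V := single a 1 - 1

theorem fwdDiffElem_add (a b : V) :
    fwdDiffElem (a + b) = fwdDiffElem a + fwdDiffElem b + fwdDiffElem a * fwdDiffElem b := by
  have : (single (a + b) 1 : AddMonoidAlgebra ℚ V) = single a 1 * single b 1 := by
    rw [single_mul_single, one_mul]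
  simp only [fwdDiffElem, this]
  ring

theorem translation_fwdDiffElem (a : V) (g : V → B) :
    translation (fwdDiffElem a) g = Δ_[a] g := by
  ext x
  simp [translation, fwdDiffElem, translationHom, fwdDiff]

theorem translation_fwdDiffElem_pow (a : V) (n : ℕ) (g : V → B) :
    translation (fwdDiffElem a ^ n) g = (Δ_[a])^[n] g := by
  rw [map_pow, Module.End.pow_apply]
  congr 1
  ext1 g
  exact translation_fwdDiffElem a g

theorem translation_fwdDiffElem_mul_four_eq_zero {g : V → B}
    (hg : ∀ d y, Δ_[d] ((Δ_[y])^[3] g) = 0) (a b c d : V) :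
    translation (fwdDiffElem a * fwdDiffElem b * fwdDiffElem c * fwdDiffElem d) g = 0 := by
  let I : Ideal (AddMonoidAlgebra ℚ V) :=
    (Ideal.torsionOf (Module.End ℚ (V → B)) (V → B) g).comap translation
  have mem_I (r) : r ∈ I ↔ translation r g = 0 := Ideal.mem_torsionOf_iff g _
  let π := Ideal.Quotient.mk I
  suffices π (fwdDiffElem a * fwdDiffElem b * fwdDiffElem c * fwdDiffElem d) = 0 from
    (mem_I _).1 (Ideal.Quotient.eq_zero_iff_mem.1 this)
  simp only [map_mul]
  refine mul_mul_mul_eq_zero_of_mul_pow_three_eq_zero (D := fun a => π (fwdDiffElem a))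
    (fun a b => by simp only [fwdDiffElem_add, map_add, map_mul]) ?_ (fun y d => ?_) a b c d
  · rw [← map_ofNat (algebraMap ℚ (AddMonoidAlgebra ℚ V ⧸ I)) 6]
    exact (IsUnit.mk0 _ (by norm_num)).map _
  · rw [← map_pow, ← map_mul, Ideal.Quotient.eq_zero_iff_mem, mem_I, map_mul,
      Module.End.mul_apply, translation_fwdDiffElem_pow, translation_fwdDiffElem]
    exact hg d y

noncomputable def polarization (k : ℕ) (g : V → B) (v : Fin k → V) : B :=
  (k.factorial : ℚ)⁻¹ • translation (∏ i, fwdDiffElem (v i)) g 0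

theorem polarization_symmetric (k : ℕ) (g : V → B) : SymmetricFn (polarization k g) := by
  intro σ v
  simp only [polarization, Function.comp_apply, Equiv.prod_comp σ (fun i => fwdDiffElem (v i))]

theorem polarization_multiAdditive {k : ℕ} {g : V → B}
    (hg : ∀ x (v : Fin k → V), translation (fwdDiffElem x * ∏ i, fwdDiffElem (v i)) g = 0) :
    MultiAdditive (polarization k g) := by
  intro i v x y
  have prod_update (z : V) : ∏ j, fwdDiffElem (Function.update v i z j) =
      fwdDiffElem z * ∏ j ∈ Finset.univ \ {i}, fwdDiffElem (v j) := by
    simp only [Function.apply_update (fun _ => fwdDiffElem),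
      Finset.prod_update_of_mem (Finset.mem_univ i)]
  have hxy := hg x (Function.update v i y)
  rw [prod_update] at hxy
  simp only [polarization, prod_update, fwdDiffElem_add, add_mul, map_add, LinearMap.add_apply,
    Pi.add_apply, mul_assoc, hxy, Pi.zero_apply, add_zero, smul_add]

theorem polarization_const (k : ℕ) (g : V → B) (x : V) :
    polarization k g (fun _ => x) = (k.factorial : ℚ)⁻¹ • (Δ_[x])^[k] g 0 := by
  simp only [polarization, Finset.prod_const, Finset.card_univ, Fintype.card_fin,
    translation_fwdDiffElem_pow]

end Translation

section CubicEquation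

variable {V B : Type*} [AddCommGroup V] [Module ℚ V] [AddCommGroup B] [Module ℚ B]

def SolvesCubicEquation (f : V → B) : Prop :=
  ∀ x y : V, f ((2 : ℚ) • x + y) + f ((2 : ℚ) • x - y) =
    (12 : ℚ) • f x + (2 : ℚ) • f (x + y) + (2 : ℚ) • f (x - y)

namespace SolvesCubicEquation

variable {f : V → B}

theorem map_zero (hf : SolvesCubicEquation f) : f 0 = 0 := by
  have h := hf 0 0
  simp only [smul_zero, add_zero, sub_zero] at h
  linear_combination (norm := module) (-(1 : ℚ) / 14) • h

theorem map_neg (hf : SolvesCubicEquation f) (x : V) : f (-x) = -f x := by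
  have h := hf 0 x
  simp only [smul_zero, zero_add, zero_sub, hf.map_zero] at h
  linear_combination (norm := module) (-1 : ℚ) • h

theorem map_two_smul (hf : SolvesCubicEquation f) (x : V) :
    f ((2 : ℚ) • x) = (8 : ℚ) • f x := by
  have h := hf x 0
  simp only [add_zero, sub_zero] at h
  linear_combination (norm := module) (2 : ℚ)⁻¹ • h

theorem map_two_smul_add (hf : SolvesCubicEquation f) (x y : V) :
    f ((2 : ℚ) • x + y) = (6 : ℚ) • f x - (3 : ℚ) • f y + (3 : ℚ) • f (x + y) - f (x - y) := by
  have h := hf y ((2 : ℚ) • x)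
  rw [show (2 : ℚ) • y + (2 : ℚ) • x = (2 : ℚ) • (x + y) by module,
    show (2 : ℚ) • y - (2 : ℚ) • x = -((2 : ℚ) • (x - y)) by module,
    show y + (2 : ℚ) • x = (2 : ℚ) • x + y by module,
    show y - (2 : ℚ) • x = -((2 : ℚ) • x - y) by module] at h
  simp only [hf.map_neg, hf.map_two_smul] at h
  linear_combination (norm := module) ((1 : ℚ) / 2) • hf x y - ((1 : ℚ) / 4) • h

theorem fwdDiff_iter_three (hf : SolvesCubicEquation f) (y z : V) :
    (Δ_[y])^[3] f z = (6 : ℚ) • f y := by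
  have h := hf.map_two_smul_add y (z + y)
  rw [show (2 : ℚ) • y + (z + y) = z + y + y + y by module,
    show y + (z + y) = z + y + y by abel, show y - (z + y) = -z by abel, hf.map_neg] at h
  simp only [Function.iterate_succ, Function.iterate_zero, Function.comp_apply, fwdDiff, id]
  linear_combination (norm := module) h

end SolvesCubicEquation

end CubicEquation

theorem stmt_15_general {V B : Type*} [AddCommGroup V] [Module ℚ V] [AddCommGroup B] [Module ℚ B]
    (f : V → B)
    (hf : ∀ x y : V, f ((2 : ℚ) • x + y) + f ((2 : ℚ) • x - y) =
      (12 : ℚ) • f x + (2 : ℚ) • f (x + y) + (2 : ℚ) • f (x - y)) :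
    (∀ x : V, f ((2 : ℚ) • x) = (8 : ℚ) • f x) ∧
    ∃ A : (Fin 3 → V) → B, MultiAdditive A ∧ SymmetricFn A ∧
      ∀ x : V, f x = A (fun _ => x) := by
  have hf : SolvesCubicEquation f := hf
  have hann (x : V) (v : Fin 3 → V) :
      translation (fwdDiffElem x * ∏ i, fwdDiffElem (v i)) f = 0 := by
    rw [Fin.prod_univ_three, ← mul_assoc, ← mul_assoc]
    refine translation_fwdDiffElem_mul_four_eq_zero (fun d y => ?_) _ _ _ _
    ext z
    simp only [fwdDiff, hf.fwdDiff_iter_three, sub_self, Pi.zero_apply]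
  refine ⟨hf.map_two_smul, polarization 3 f, polarization_multiAdditive hann,
    polarization_symmetric 3 f, fun x => ?_⟩
  rw [polarization_const, hf.fwdDiff_iter_three, smul_smul]
  norm_num [Nat.factorial]

theorem stmt_15 {V B : Type*} [AddCommGroup V] [Module ℚ V] [AddCommGroup B] [Module ℚ B]
    (f : V → B) (hf0 : f 0 = 0)
    (hf : ∀ x y : V, f ((2 : ℚ) • x + y) + f ((2 : ℚ) • x - y) =
      (12 : ℚ) • f x + (2 : ℚ) • f (x + y) + (2 : ℚ) • f (x - y)) :
    (∀ x : V, f ((2 : ℚ) • x) = (8 : ℚ) • f x) ∧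
    ∃ A : (Fin 3 → V) → B, MultiAdditive A ∧ SymmetricFn A ∧
      ∀ x : V, f x = A (fun _ => x) :=
  stmt_15_general f hf
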